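/- Let p > 3 be prime. Every connected component of the Markoff mod p graph has a number of vertices divisible by p. -/

import Mathlib

def Markoff (p : ℕ) (x : ZMod p × ZMod p × ZMod p) : Prop :=
  x.1^2 + x.2.1^2 + x.2.2^2 = 3 * x.1 * x.2.1 * x.2.2

def vieta1 (p : ℕ) (x : ZMod p × ZMod p × ZMod p) : ZMod p × ZMod p × ZMod p :=
  (3 * x.2.1 * x.2.2 - x.1, x.2.1, x.2.2)

def vieta2 (p : ℕ) (x : ZMod p × ZMod p × ZMod p) : ZMod p × ZMod p × ZMod p :=
  (x.1, 3 * x.1 * x.2.2 - x.2.1, x.2.2)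

def vieta3 (p : ℕ) (x : ZMod p × ZMod p × ZMod p) : ZMod p × ZMod p × ZMod p :=
  (x.1, x.2.1, 3 * x.1 * x.2.1 - x.2.2)

def y1 (p : ℕ) [Fact p.Prime] (x : ZMod p × ZMod p × ZMod p) : ZMod p :=
  if x.1 * x.2.1 * x.2.2 ≠ 0 then x.1 / (3 * x.2.1 * x.2.2)
  else if x.1 = 0 then 0 else 1/2

def y2 (p : ℕ) [Fact p.Prime] (x : ZMod p × ZMod p × ZMod p) : ZMod p :=
  if x.1 * x.2.1 * x.2.2 ≠ 0 then x.2.1 / (3 * x.1 * x.2.2)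
  else if x.2.1 = 0 then 0 else 1/2

def y3 (p : ℕ) [Fact p.Prime] (x : ZMod p × ZMod p × ZMod p) : ZMod p :=
  if x.1 * x.2.1 * x.2.2 ≠ 0 then x.2.2 / (3 * x.1 * x.2.1)
  else if x.2.2 = 0 then 0 else 1/2

def MarkoffVertex (p : ℕ) : Type :=
  {x : ZMod p × ZMod p × ZMod p // Markoff p x ∧ x ≠ (0, 0, 0)}

def MarkoffGraph (p : ℕ) : SimpleGraph (MarkoffVertex p) where
  Adj a b := a ≠ b ∧
    (b.1 = vieta1 p a.1 ∨ b.1 = vieta2 p a.1 ∨ b.1 = vieta3 p a.1)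
  symm := by
    have i1 : ∀ x, vieta1 p (vieta1 p x) = x := by intro x; simp [vieta1]
    have i2 : ∀ x, vieta2 p (vieta2 p x) = x := by intro x; simp [vieta2]
    have i3 : ∀ x, vieta3 p (vieta3 p x) = x := by intro x; simp [vieta3]
    constructor
    rintro a b ⟨hne, h⟩
    refine ⟨hne.symm, ?_⟩
    rcases h with h | h | h
    · exact Or.inl (by rw [h, i1])
    · exact Or.inr (Or.inl (by rw [h, i2]))
    · exact Or.inr (Or.inr (by rw [h, i3]))
  loopless := by constructor; rintro a ⟨h, -⟩; exact h rfl

/-!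
The weights satisfy `y1 + y2 + y3 = 1` at every vertex and `yi (vietai x) + yi x = 1` for each
Vieta involution: off the coordinate planes `y1 (a, b, c) = a / (3 b c)`, and a nonzero Markoff
triple with a vanishing coordinate has exactly one, which is what the values `0` and `1/2` are
chosen for. Each `vietai` permutes every connected component `C`, so summing the second identity
over `C` gives `2 ∑_C yi = |C|`, while summing the first gives `∑_C (y1 + y2 + y3) = |C|`.
Hence `3 |C| = 2 |C|` in `𝔽_p`, that is, `p ∣ |C|`.
-/

open Function

theorem ZMod.natCast_ne_zero_of_pos_of_lt {n p : ℕ} (hn : 0 < n) (hnp : n < p) :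
    (n : ZMod p) ≠ 0 :=
  (ZMod.natCast_eq_zero_iff n p).not.2 (Nat.not_dvd_of_pos_of_lt hn hnp)

theorem two_mul_sum_eq_card_of_involutive {α R : Type*} [Fintype α] [NonAssocSemiring R]
    {σ : α → α} (hσ : Involutive σ) {f : α → R} (hf : ∀ x, f (σ x) + f x = 1) :
    2 * ∑ x, f x = Nat.card α := by
  calc 2 * ∑ x, f x = ∑ x, f (σ x) + ∑ x, f x := by
        rw [two_mul, ← Equiv.sum_comp (hσ.toPerm σ) f]; rfl
    _ = Nat.card α := by
      simp only [← Finset.sum_add_distrib, hf, Finset.sum_const, Finset.card_univ,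
        nsmul_one, Fintype.card_eq_nat_card]

theorem SimpleGraph.ConnectedComponent.two_mul_sum_eq_card_of_involutive {V R : Type*}
    [NonAssocSemiring R] {G : SimpleGraph V} {c : G.ConnectedComponent}
    [Fintype {v // G.connectedComponentMk v = c}] {σ : V → V} (hσ : Involutive σ)
    (hreach : ∀ v, G.Reachable v (σ v)) {f : V → R} (hf : ∀ v, f (σ v) + f v = 1) :
    2 * ∑ v : {v // G.connectedComponentMk v = c}, f v =
      Nat.card {v // G.connectedComponentMk v = c} :=
  _root_.two_mul_sum_eq_card_of_involutive
    (Subtype.map_involutive (fun v hv => (ConnectedComponent.sound (hreach v)).symm.trans hv) hσ)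
    (fun v => hf v)

section Vieta

variable {p : ℕ}

theorem vieta1_involutive : Involutive (vieta1 p) := fun x => by simp [vieta1]

theorem vieta2_involutive : Involutive (vieta2 p) := fun x => by simp [vieta2]

theorem vieta3_involutive : Involutive (vieta3 p) := fun x => by simp [vieta3]

theorem markoff_vieta1 {x : ZMod p × ZMod p × ZMod p} (h : Markoff p x) :
    Markoff p (vieta1 p x) := by
  simp only [Markoff, vieta1] at h ⊢
  linear_combination h

theorem markoff_vieta2 {x : ZMod p × ZMod p × ZMod p} (h : Markoff p x) :
    Markoff p (vieta2 p x) := by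
  simp only [Markoff, vieta2] at h ⊢
  linear_combination h

theorem markoff_vieta3 {x : ZMod p × ZMod p × ZMod p} (h : Markoff p x) :
    Markoff p (vieta3 p x) := by
  simp only [Markoff, vieta3] at h ⊢
  linear_combination h

theorem MarkoffGraph.two_mul_sum_eq_card {c : (MarkoffGraph p).ConnectedComponent}
    [Fintype {v // (MarkoffGraph p).connectedComponentMk v = c}]
    {σ : ZMod p × ZMod p × ZMod p → ZMod p × ZMod p × ZMod p} (hσ : Involutive σ)
    (hσ0 : σ (0, 0, 0) = (0, 0, 0)) (hM : ∀ x, Markoff p x → Markoff p (σ x))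
    (hvieta : ∀ x, σ x = vieta1 p x ∨ σ x = vieta2 p x ∨ σ x = vieta3 p x)
    {R : Type*} [NonAssocSemiring R] {f : ZMod p × ZMod p × ZMod p → R}
    (hf : ∀ x, Markoff p x → x ≠ (0, 0, 0) → f (σ x) + f x = 1) :
    2 * ∑ v : {v // (MarkoffGraph p).connectedComponentMk v = c}, f v.1.1 =
      Nat.card {v // (MarkoffGraph p).connectedComponentMk v = c} := by
  let τ : MarkoffVertex p → MarkoffVertex p :=
    Subtype.map σ fun x hx => ⟨hM x hx.1, fun h => hx.2 (by rw [← hσ x, h, hσ0])⟩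
  refine SimpleGraph.ConnectedComponent.two_mul_sum_eq_card_of_involutive
    (σ := τ) (f := fun v => f v.1) (Subtype.map_involutive _ hσ) (fun v => ?_)
    (fun v => hf v.1 v.2.1 v.2.2)
  by_cases h : v = τ v
  · exact h ▸ SimpleGraph.Reachable.refl v
  · exact SimpleGraph.Adj.reachable ⟨h, hvieta v.1⟩

end Vieta

theorem ne_zero_of_markoff_of_mul_eq_zero {K : Type*} [CommRing K] [NoZeroDivisors K]
    {a b c : K} (hM : a ^ 2 + b ^ 2 + c ^ 2 = 3 * a * b * c) (hne : ¬(a = 0 ∧ b = 0 ∧ c = 0))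
    (hbc : b * c = 0) : a ≠ 0 := by
  rintro rfl
  rcases mul_eq_zero.1 hbc with rfl | rfl
  · exact hne ⟨rfl, rfl, pow_eq_zero_iff two_ne_zero |>.1 (by linear_combination hM)⟩
  · exact hne ⟨rfl, pow_eq_zero_iff two_ne_zero |>.1 (by linear_combination hM), rfl⟩

section Weights

variable {p : ℕ} [Fact p.Prime]

theorem y2_eq_y1 (a b c : ZMod p) : y2 p (a, b, c) = y1 p (b, a, c) := by
  simp only [y1, y2, mul_left_comm b a c, mul_assoc]

theorem y3_eq_y1 (a b c : ZMod p) : y3 p (a, b, c) = y1 p (c, a, b) := by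
  simp only [y1, y3, mul_rotate c a b]

theorem y1_of_mul_ne_zero (a : ZMod p) {b c : ZMod p} (hbc : b * c ≠ 0) :
    y1 p (a, b, c) = a / (3 * b * c) := by
  by_cases ha : a = 0 <;> simp_all [y1, mul_assoc]

theorem y1_of_mul_eq_zero {a b c : ZMod p} (ha : a ≠ 0) (hbc : b * c = 0) :
    y1 p (a, b, c) = 1 / 2 := by
  simp [y1, ha, mul_assoc, hbc]

variable (h2 : (2 : ZMod p) ≠ 0) (h3 : (3 : ZMod p) ≠ 0)
include h2 h3

theorem y1_sub_add_y1 {a b c : ZMod p} (hM : a ^ 2 + b ^ 2 + c ^ 2 = 3 * a * b * c)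
    (hne : ¬(a = 0 ∧ b = 0 ∧ c = 0)) : y1 p (3 * b * c - a, b, c) + y1 p (a, b, c) = 1 := by
  have := NeZero.mk h2
  by_cases hbc : b * c = 0
  · have ha := ne_zero_of_markoff_of_mul_eq_zero hM hne hbc
    have ha' : 3 * b * c - a ≠ 0 := by simpa [mul_assoc, hbc] using ha
    rw [y1_of_mul_eq_zero ha hbc, y1_of_mul_eq_zero ha' hbc, add_halves]
  · have h3bc : 3 * b * c ≠ 0 := by rw [mul_assoc]; exact mul_ne_zero h3 hbc
    rw [y1_of_mul_ne_zero _ hbc, y1_of_mul_ne_zero _ hbc, ← add_div, sub_add_cancel,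
      div_self h3bc]

theorem y1_add_y1_add_y1 {a b c : ZMod p} (hM : a ^ 2 + b ^ 2 + c ^ 2 = 3 * a * b * c)
    (hne : ¬(a = 0 ∧ b = 0 ∧ c = 0)) :
    y1 p (a, b, c) + y1 p (b, a, c) + y1 p (c, a, b) = 1 := by
  have nz (x y z : ZMod p) (h : x ^ 2 + y ^ 2 + z ^ 2 = 3 * x * y * z)
      (h0 : ¬(x = 0 ∧ y = 0 ∧ z = 0)) (hyz : y * z = 0) : x ≠ 0 :=
    ne_zero_of_markoff_of_mul_eq_zero h h0 hyz
  by_cases habc : a * b * c = 0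
  · -- exactly one coordinate vanishes, so the sum is 0 + 1/2 + 1/2
    rcases mul_eq_zero.1 habc with hab | rfl
    · rcases mul_eq_zero.1 hab with rfl | rfl
      · have hb := nz b 0 c (by linear_combination hM) (by tauto) (zero_mul c)
        have hc := nz c 0 b (by linear_combination hM) (by tauto) (zero_mul b)
        simp [y1, hb, hc, ← two_mul, h2]
      · have ha := nz a 0 c (by linear_combination hM) (by tauto) (zero_mul c)
        have hc := nz c a 0 (by linear_combination hM) (by tauto) (mul_zero a)
        simp [y1, ha, hc, ← two_mul, h2]
    · have ha := nz a b 0 (by linear_combination hM) (by tauto) (mul_zero b)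
      have hb := nz b a 0 (by linear_combination hM) (by tauto) (mul_zero a)
      simp [y1, ha, hb, ← two_mul, h2]
  · have ha : a ≠ 0 := by rintro rfl; simp at habc
    have hb : b ≠ 0 := by rintro rfl; simp at habc
    have hc : c ≠ 0 := by rintro rfl; simp at habc
    rw [y1_of_mul_ne_zero _ (mul_ne_zero hb hc), y1_of_mul_ne_zero _ (mul_ne_zero ha hc),
      y1_of_mul_ne_zero _ (mul_ne_zero ha hb)]
    field_simp
    linear_combination hM

theorem y1_vieta1_add_y1 {x : ZMod p × ZMod p × ZMod p} (hM : Markoff p x)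
    (h0 : x ≠ (0, 0, 0)) : y1 p (vieta1 p x) + y1 p x = 1 := by
  obtain ⟨a, b, c⟩ := x
  exact y1_sub_add_y1 h2 h3 hM (by simpa using h0)

theorem y2_vieta2_add_y2 {x : ZMod p × ZMod p × ZMod p} (hM : Markoff p x)
    (h0 : x ≠ (0, 0, 0)) : y2 p (vieta2 p x) + y2 p x = 1 := by
  obtain ⟨a, b, c⟩ := x
  simp only [Markoff, ne_eq, Prod.mk.injEq] at hM h0
  rw [vieta2, y2_eq_y1, y2_eq_y1]
  exact y1_sub_add_y1 h2 h3 (by linear_combination hM) (by tauto)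

theorem y3_vieta3_add_y3 {x : ZMod p × ZMod p × ZMod p} (hM : Markoff p x)
    (h0 : x ≠ (0, 0, 0)) : y3 p (vieta3 p x) + y3 p x = 1 := by
  obtain ⟨a, b, c⟩ := x
  simp only [Markoff, ne_eq, Prod.mk.injEq] at hM h0
  rw [vieta3, y3_eq_y1, y3_eq_y1]
  exact y1_sub_add_y1 h2 h3 (by linear_combination hM) (by tauto)

theorem y1_add_y2_add_y3 {x : ZMod p × ZMod p × ZMod p} (hM : Markoff p x)
    (h0 : x ≠ (0, 0, 0)) : y1 p x + y2 p x + y3 p x = 1 := by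
  obtain ⟨a, b, c⟩ := x
  rw [y2_eq_y1, y3_eq_y1]
  exact y1_add_y1_add_y1 h2 h3 hM (by simpa using h0)

end Weights

theorem stmt9 (p : ℕ) [Fact p.Prime] (hp : 3 < p)
    (c : (MarkoffGraph p).ConnectedComponent) :
    p ∣ Nat.card {v : MarkoffVertex p // (MarkoffGraph p).connectedComponentMk v = c} := by
  classical
  have h2 : (2 : ZMod p) ≠ 0 := by
    exact_mod_cast ZMod.natCast_ne_zero_of_pos_of_lt two_pos (by omega)
  have h3 : (3 : ZMod p) ≠ 0 := by exact_mod_cast ZMod.natCast_ne_zero_of_pos_of_lt three_pos hp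
  have : Fintype (MarkoffVertex p) := by unfold MarkoffVertex; infer_instance
  have s1 := MarkoffGraph.two_mul_sum_eq_card (c := c) vieta1_involutive (by simp [vieta1])
    (fun _ => markoff_vieta1) (fun _ => Or.inl rfl) (fun _ => y1_vieta1_add_y1 h2 h3)
  have s2 := MarkoffGraph.two_mul_sum_eq_card (c := c) vieta2_involutive (by simp [vieta2])
    (fun _ => markoff_vieta2) (fun _ => Or.inr (Or.inl rfl)) (fun _ => y2_vieta2_add_y2 h2 h3)
  have s3 := MarkoffGraph.two_mul_sum_eq_card (c := c) vieta3_involutive (by simp [vieta3])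
    (fun _ => markoff_vieta3) (fun _ => Or.inr (Or.inr rfl)) (fun _ => y3_vieta3_add_y3 h2 h3)
  have s : ∑ v : {v // (MarkoffGraph p).connectedComponentMk v = c},
      (y1 p v.1.1 + y2 p v.1.1 + y3 p v.1.1) =
        Nat.card {v // (MarkoffGraph p).connectedComponentMk v = c} := by
    simp [fun v : MarkoffVertex p => y1_add_y2_add_y3 h2 h3 v.2.1 v.2.2]
  rw [Finset.sum_add_distrib, Finset.sum_add_distrib] at s
  rw [← ZMod.natCast_eq_zero_iff]
  linear_combination 2 * s - s1 - s2 - s3
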